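/- arXiv:0906.5167 — 3 statements merged into one kernel-verified Lean document; each statement's English description precedes it below -/
import Mathlib

section
/- The number of permutations in S(N) with no decreasing subsequence of length 3 equals the Catalan number (2N)!/(N!(N+1)!). -/
open Finset

def rect (d q : ℕ) : YoungDiagram where
  cells := Finset.range d ×ˢ Finset.range q
  isLowerSet := by
    rintro ⟨a, b⟩ ⟨c, e⟩ ⟨h1, h2⟩ h
    simp only [Finset.coe_product, Set.mem_prod, Finset.mem_coe, Finset.mem_range] at *
    omega

def complY (d q : ℕ) (μ : YoungDiagram) : YoungDiagram where
  cells := (Finset.range d ×ˢ Finset.range q).filter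
    (fun c => c.2 < q - μ.rowLen (d - 1 - c.1))
  isLowerSet := by
    rintro ⟨a, b⟩ ⟨c, e⟩ ⟨h1, h2⟩ h
    simp only [Finset.coe_filter, Set.mem_setOf_eq, Finset.mem_product, Finset.mem_range] at *
    have := μ.rowLen_anti (d - 1 - a) (d - 1 - c) (by omega)
    omega

noncomputable def dimSYT (μ : YoungDiagram) : ℕ :=
  Nat.card {f : μ.cells → Fin μ.card //
    Function.Bijective f ∧
    ∀ a b : μ.cells, (a : ℕ × ℕ).1 ≤ (b : ℕ × ℕ).1 → (a : ℕ × ℕ).2 ≤ (b : ℕ × ℕ).2 →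
      a ≠ b → f a < f b}

def HasDecreasingSubseq {N : ℕ} (σ : Equiv.Perm (Fin N)) (k : ℕ) : Prop :=
  ∃ s : Fin k → Fin N, StrictMono s ∧ ∀ i j : Fin k, i < j → σ (s j) < σ (s i)

def HasIncreasingSubseq {N : ℕ} (σ : Equiv.Perm (Fin N)) (k : ℕ) : Prop :=
  ∃ s : Fin k → Fin N, StrictMono s ∧ ∀ i j : Fin k, i < j → σ (s i) < σ (s j)

noncomputable def S (d N : ℕ) : ℕ :=
  Nat.card {σ : Equiv.Perm (Fin N) // ¬ HasDecreasingSubseq σ (d + 1)}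

noncomputable def W (d : ℕ) (y : Fin d → ℝ) : ℝ :=
  (1/2) * ∑ i, y i ^ 2 -
    ∑ p ∈ Finset.univ.filter (fun p : Fin d × Fin d => p.1 < p.2), Real.log (y p.1 - y p.2)

noncomputable def dimR (d : ℕ) (l : Fin d → ℝ) : ℝ :=
  (Real.Gamma (∑ i, l i + 1) / ∏ i, Real.Gamma (l i - (i : ℕ) + d)) *
    ∏ p ∈ Finset.univ.filter (fun p : Fin d × Fin d => p.1 < p.2),
      (l p.1 - l p.2 + (p.2 : ℕ) - (p.1 : ℕ))

noncomputable def mehta (d : ℕ) (β : ℝ) : ℝ :=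
  ∫ x : Fin d → ℝ, Real.exp (-(β/2) * ∑ i, x i ^ 2) *
    ∏ p ∈ Finset.univ.filter (fun p : Fin d × Fin d => p.1 < p.2), |x p.1 - x p.2| ^ β

/-!
A permutation `σ` is encoded by its prefix maxima `m i = max_{j ≤ i} σ j`, a monotone map with
`i ≤ m i`. If `σ` avoids `321`, its non-records form an increasing subsequence, so `σ` is recovered
from `m`: keep `m` on the records of `m` and fill the other positions increasingly with the unused
values. Conversely, for every monotone `m` with `i ≤ m i` this filling avoids `321` and has prefix
maxima `m`. Such maps on `{0, …, n}` split at their first fixed point `k` into two such maps of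
sizes `k` and `n - k`, as Dyck paths split at their first return, so they are counted by the
Catalan recursion.
-/

namespace Finset

variable {α : Type*} [LinearOrder α]

theorem card_filter_le_orderEmbOfFin (s : Finset α) {k : ℕ} (h : #s = k) (r : Fin k) :
    #(s.filter (· ≤ s.orderEmbOfFin h r)) = r + 1 := by
  have : s.filter (· ≤ s.orderEmbOfFin h r) = (Iic r).map (s.orderEmbOfFin h).toEmbedding := by
    ext y
    simp only [mem_filter, mem_map, mem_Iic, RelEmbedding.coe_toEmbedding]
    constructor
    · rintro ⟨hy, hyr⟩
      obtain ⟨a, rfl⟩ : y ∈ Set.range (s.orderEmbOfFin h) := by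
        rwa [range_orderEmbOfFin]
      exact ⟨a, (OrderEmbedding.le_iff_le _).1 hyr, rfl⟩
    · rintro ⟨a, ha, rfl⟩
      exact ⟨orderEmbOfFin_mem s h a, (OrderEmbedding.le_iff_le _).2 ha⟩
  rw [this, card_map, Fin.card_Iic]

theorem orderEmbOfFin_le_of_lt_card_filter_le {s : Finset α} {k : ℕ} (h : #s = k) {r : Fin k}
    {x : α} (hr : (r : ℕ) < #(s.filter (· ≤ x))) : s.orderEmbOfFin h r ≤ x := by
  by_contra! hx
  have hsub : s.filter (· ≤ x) ⊂ s.filter (· ≤ s.orderEmbOfFin h r) := by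
    refine (ssubset_iff_of_subset fun y hy => ?_).2
      ⟨s.orderEmbOfFin h r, by simp, by simp [hx]⟩
    rw [mem_filter] at hy ⊢
    exact ⟨hy.1, hy.2.trans hx.le⟩
  have := card_lt_card hsub
  rw [card_filter_le_orderEmbOfFin] at this
  omega

theorem card_filter_le_add_card_compl_filter_le {n : ℕ} (s : Finset (Fin n)) (x : Fin n) :
    #(s.filter (· ≤ x)) + #(sᶜ.filter (· ≤ x)) = x + 1 := by
  rw [← Fin.card_Iic, ← card_filter_add_card_filter_not (s := Iic x) (· ∈ s)]
  congr 2 <;> ext y <;> simp [and_comm]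

end Finset

section Records

variable {ι α : Type*} [LinearOrder ι] [LinearOrder α]

def records [Fintype ι] (f : ι → α) : Finset ι :=
  univ.filter fun i => ∀ j < i, f j < f i

variable [Fintype ι] {f : ι → α} {i : ι}

lemma mem_records : i ∈ records f ↔ ∀ j < i, f j < f i := by
  simp [records]

lemma injOn_records (f : ι → α) : Set.InjOn f (records f) := by
  intro a ha b hb hab
  by_contra hne
  rcases lt_or_gt_of_ne hne with h | h
  · exact (mem_records.1 hb a h).ne hab
  · exact (mem_records.1 ha b h).ne' hab

lemma Monotone.exists_mem_records_eq (hf : Monotone f) (i : ι) :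
    ∃ j ∈ records f, j ≤ i ∧ f j = f i := by
  have hne : (univ.filter fun j => f j = f i).Nonempty := ⟨i, by simp⟩
  obtain ⟨-, hj⟩ := mem_filter.1 ((univ.filter fun j => f j = f i).min'_mem hne)
  refine ⟨_, mem_records.2 fun j hj' => (hf hj'.le).lt_of_ne fun hfj => ?_,
    min'_le _ _ (by simp), hj⟩
  exact (min'_le _ j (by simp [hfj, hj])).not_gt hj'

lemma image_records_filter_le_subset (i : ι) :
    ((records f).image f).filter (· ≤ f i) ⊆ ((records f).filter (· ≤ i)).image f := by
  intro y hy
  simp only [mem_filter, mem_image] at hy ⊢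
  obtain ⟨⟨j, hj, rfl⟩, hji⟩ := hy
  exact ⟨j, ⟨hj, not_lt.1 fun hij => (mem_records.1 hj i hij).not_ge hji⟩, rfl⟩

variable [LocallyFiniteOrderBot ι]

lemma partialSups_eq_of_mem_records (hi : i ∈ records f) : partialSups f i = f i :=
  le_antisymm (partialSups_le _ _ _ fun j hj => hj.lt_or_eq.elim
    (fun h => (mem_records.1 hi j h).le) (fun h => h ▸ le_rfl)) (le_partialSups f i)

@[simp]
lemma records_partialSups (f : ι → α) : records (partialSups f) = records f := by
  ext i
  refine ⟨fun hi => ?_, fun hi => mem_records.2 fun j hji => ?_⟩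
  · obtain ⟨k, hki, hk⟩ := exists_partialSups_eq f i
    obtain rfl : k = i := hki.eq_of_not_lt fun hlt =>
      (mem_records.1 hi k hlt).not_ge (hk ▸ le_partialSups f k)
    exact mem_records.2 fun j hji =>
      (le_partialSups f j).trans_lt (hk ▸ mem_records.1 hi j hji)
  · obtain ⟨k, hkj, hk⟩ := exists_partialSups_eq f j
    rw [hk, partialSups_eq_of_mem_records hi]
    exact mem_records.1 hi k (hkj.trans_lt hji)

end Records

section Fill

variable {n : ℕ} {f g : Fin n → Fin n} {i j : Fin n}

lemma card_compl_image_records (f : Fin n → Fin n) :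
    #((records f).image f)ᶜ = #(records f)ᶜ := by
  rw [card_compl, card_compl, card_image_of_injOn (injOn_records f)]

def fillNonrecords (f : Fin n → Fin n) (i : Fin n) : Fin n :=
  if hi : i ∈ records f then f i
  else ((records f).image f)ᶜ.orderEmbOfFin (card_compl_image_records f)
    (((records f)ᶜ.orderIsoOfFin rfl).symm ⟨i, mem_compl.2 hi⟩)

lemma fillNonrecords_of_mem (hi : i ∈ records f) : fillNonrecords f i = f i :=
  dif_pos hi

lemma fillNonrecords_of_notMem (hi : i ∉ records f) :
    fillNonrecords f i = ((records f).image f)ᶜ.orderEmbOfFin (card_compl_image_records f)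
      (((records f)ᶜ.orderIsoOfFin rfl).symm ⟨i, mem_compl.2 hi⟩) :=
  dif_neg hi

lemma fillNonrecords_notMem_image (hi : i ∉ records f) :
    fillNonrecords f i ∉ (records f).image f := by
  rw [fillNonrecords_of_notMem hi, ← mem_compl]
  exact orderEmbOfFin_mem _ _ _

lemma fillNonrecords_lt (hi : i ∉ records f) (hj : j ∉ records f) (hij : i < j) :
    fillNonrecords f i < fillNonrecords f j := by
  rw [fillNonrecords_of_notMem hi, fillNonrecords_of_notMem hj, OrderEmbedding.lt_iff_lt,
    OrderIso.lt_iff_lt]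
  exact hij

lemma fillNonrecords_injective (f : Fin n → Fin n) : Function.Injective (fillNonrecords f) := by
  intro a b hab
  by_cases ha : a ∈ records f <;> by_cases hb : b ∈ records f
  · rw [fillNonrecords_of_mem ha, fillNonrecords_of_mem hb] at hab
    exact injOn_records f ha hb hab
  · have := fillNonrecords_notMem_image hb
    rw [← hab, fillNonrecords_of_mem ha] at this
    exact absurd (mem_image_of_mem f ha) this
  · have := fillNonrecords_notMem_image ha
    rw [hab, fillNonrecords_of_mem hb] at this
    exact absurd (mem_image_of_mem f hb) this
  · by_contra hne
    rcases lt_or_gt_of_ne hne with h | h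
    · exact (fillNonrecords_lt ha hb h).ne hab
    · exact (fillNonrecords_lt hb ha h).ne' hab

/-- At a non-record `i`, the records up to `i` take all values of records up to `f i`; as
`i ≤ f i`, at least as many free values lie up to `f i` as non-records lie up to `i`. -/
lemma fillNonrecords_le (hsup : ∀ i, i ≤ f i) (i : Fin n) : fillNonrecords f i ≤ f i := by
  by_cases hi : i ∈ records f
  · exact (fillNonrecords_of_mem hi).le
  set r := ((records f)ᶜ.orderIsoOfFin rfl).symm ⟨i, mem_compl.2 hi⟩
  have hr : (records f)ᶜ.orderEmbOfFin rfl r = i := by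
    rw [← coe_orderIsoOfFin_apply, OrderIso.apply_symm_apply]
  have hrank : #((records f)ᶜ.filter (· ≤ i)) = r + 1 := by
    rw [← hr, card_filter_le_orderEmbOfFin]
  have htaken := card_le_card (image_records_filter_le_subset (f := f) i)
  have hsplit := card_filter_le_add_card_compl_filter_le (records f) i
  have hsplit' := card_filter_le_add_card_compl_filter_le ((records f).image f) (f i)
  have himage := card_image_le (s := (records f).filter (· ≤ i)) (f := f)
  have hi_le := Fin.le_def.1 (hsup i)
  rw [fillNonrecords_of_notMem hi]
  exact orderEmbOfFin_le_of_lt_card_filter_le _ (by omega)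

lemma partialSups_fillNonrecords (hf : Monotone f) (hsup : ∀ i, i ≤ f i) :
    ⇑(partialSups (fillNonrecords f)) = f := by
  funext i
  refine le_antisymm (partialSups_le _ _ _ fun j hj => (fillNonrecords_le hsup j).trans (hf hj)) ?_
  obtain ⟨j, hj, hji, hfj⟩ := hf.exists_mem_records_eq i
  rw [← hfj, ← fillNonrecords_of_mem hj]
  exact le_partialSups_of_le _ hji

lemma eq_fillNonrecords (hg : Function.Injective g) (hrec : ∀ i ∈ records f, g i = f i)
    (hmono : ∀ i j, i ∉ records f → j ∉ records f → i < j → g i < g j) :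
    g = fillNonrecords f := by
  set e := (records f)ᶜ.orderEmbOfFin rfl
  have hfree (r) : g (e r) ∈ ((records f).image f)ᶜ := by
    rw [mem_compl, mem_image]
    rintro ⟨j, hj, hgj⟩
    have hje : j = e r := hg (by rw [hrec j hj, hgj])
    exact mem_compl.1 (orderEmbOfFin_mem (records f)ᶜ rfl r) (hje ▸ hj)
  have hfill := orderEmbOfFin_unique (card_compl_image_records f) hfree fun r s hrs =>
    hmono _ _ (mem_compl.1 (orderEmbOfFin_mem _ _ r)) (mem_compl.1 (orderEmbOfFin_mem _ _ s))
      (e.strictMono hrs)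
  funext i
  by_cases hi : i ∈ records f
  · rw [fillNonrecords_of_mem hi, hrec i hi]
  · rw [fillNonrecords_of_notMem hi, ← hfill]
    simp only [e, ← coe_orderIsoOfFin_apply, OrderIso.apply_symm_apply]

end Fill

section Avoidance

variable {n : ℕ}

lemma hasDecreasingSubseq_three_iff {σ : Equiv.Perm (Fin n)} :
    HasDecreasingSubseq σ 3 ↔ ∃ a b c, a < b ∧ b < c ∧ σ c < σ b ∧ σ b < σ a := by
  constructor
  · rintro ⟨s, hs, hσs⟩
    exact ⟨s 0, s 1, s 2, hs (by decide), hs (by decide), hσs 1 2 (by decide),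
      hσs 0 1 (by decide)⟩
  · rintro ⟨a, b, c, hab, hbc, hcb, hba⟩
    have hmono : StrictMono ![a, b, c] :=
      Fin.strictMono_iff_lt_succ.2 fun i => by fin_cases i <;> assumption
    have hanti : StrictAnti (σ ∘ ![a, b, c]) :=
      Fin.strictAnti_iff_succ_lt.2 fun i => by fin_cases i <;> assumption
    exact ⟨_, hmono, fun i j hij => hanti hij⟩

lemma fillNonrecords_not_exists_decreasing {f : Fin n → Fin n} (hf : Monotone f)
    (hsup : ∀ i, i ≤ f i) : ¬ ∃ a b c, a < b ∧ b < c ∧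
      fillNonrecords f c < fillNonrecords f b ∧ fillNonrecords f b < fillNonrecords f a := by
  rintro ⟨a, b, c, hab, hbc, hcb, hba⟩
  by_cases hb : b ∈ records f
  · refine hba.not_ge ((fillNonrecords_le hsup a).trans ?_)
    exact fillNonrecords_of_mem hb ▸ hf hab.le
  by_cases hc : c ∈ records f
  · refine hcb.not_ge ((fillNonrecords_le hsup b).trans ?_)
    exact fillNonrecords_of_mem hc ▸ hf hbc.le
  exact hcb.not_gt (fillNonrecords_lt hb hc hbc)

lemma fillNonrecords_partialSups {σ : Fin n → Fin n} (hσ : Function.Injective σ)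
    (h321 : ¬ ∃ a b c, a < b ∧ b < c ∧ σ c < σ b ∧ σ b < σ a) :
    fillNonrecords (partialSups σ) = σ := by
  refine (eq_fillNonrecords hσ (fun i hi => ?_) fun i j hi hj hij => ?_).symm
  · rw [records_partialSups] at hi
    exact (partialSups_eq_of_mem_records hi).symm
  · rw [records_partialSups, mem_records] at hi
    push Not at hi
    obtain ⟨a, hai, hia⟩ := hi
    refine (lt_or_gt_of_ne (hσ.ne hij.ne)).resolve_right fun hji => h321 ?_
    exact ⟨a, i, j, hai, hij, hji, hia.lt_of_ne (hσ.ne hai.ne')⟩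

lemma le_partialSups_of_injective {σ : Fin n → Fin n} (hσ : Function.Injective σ) (i : Fin n) :
    i ≤ partialSups σ i := by
  have hsub : (Iic i).image σ ⊆ Iic (partialSups σ i) := by
    intro y hy
    obtain ⟨j, hj, rfl⟩ := mem_image.1 hy
    exact mem_Iic.2 (le_partialSups_of_le σ (mem_Iic.1 hj))
  have := card_le_card hsub
  rw [card_image_of_injective _ hσ, Fin.card_Iic, Fin.card_Iic] at this
  exact Fin.le_def.2 (by omega)

end Avoidance

def SuperdiagMono (n : ℕ) : Type :=
  {f : Fin n → Fin n // Monotone f ∧ ∀ i, i ≤ f i}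

instance (n : ℕ) : Finite (SuperdiagMono n) :=
  Subtype.finite

/-- `SuperdiagMono m` for functions `ℕ → ℕ` read on `[0, m)`, where cutting and shifting are
plain arithmetic. -/
structure IsSuperdiagMonoNat (m : ℕ) (F : ℕ → ℕ) : Prop where
  mono : ∀ ⦃i j⦄, i ≤ j → j < m → F i ≤ F j
  le_apply : ∀ i < m, i ≤ F i
  apply_lt : ∀ i < m, F i < m

namespace SuperdiagMono

variable {m : ℕ} {F : ℕ → ℕ}

def toNat (f : SuperdiagMono m) (i : ℕ) : ℕ :=
  if h : i < m then f.1 ⟨i, h⟩ else 0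

lemma toNat_of_lt (f : SuperdiagMono m) {i : ℕ} (h : i < m) : f.toNat i = f.1 ⟨i, h⟩ :=
  dif_pos h

lemma isSuperdiagMonoNat_toNat (f : SuperdiagMono m) : IsSuperdiagMonoNat m f.toNat where
  mono i j hij hj := by
    rw [f.toNat_of_lt hj, f.toNat_of_lt (hij.trans_lt hj)]
    exact f.2.1 (Fin.mk_le_mk.2 hij)
  le_apply i hi := by rw [f.toNat_of_lt hi]; exact f.2.2 ⟨i, hi⟩
  apply_lt i hi := by rw [f.toNat_of_lt hi]; exact (f.1 _).2

def ofNat (hF : IsSuperdiagMonoNat m F) : SuperdiagMono m :=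
  ⟨fun i => ⟨F i, hF.apply_lt i i.2⟩, fun _ j hij => hF.mono hij j.2, fun i => hF.le_apply i i.2⟩

lemma toNat_ofNat (hF : IsSuperdiagMonoNat m F) {i : ℕ} (h : i < m) : (ofNat hF).toNat i = F i :=
  toNat_of_lt _ h

lemma ext_toNat {f g : SuperdiagMono m} (h : ∀ i < m, f.toNat i = g.toNat i) : f = g := by
  refine Subtype.ext (funext fun i => Fin.ext ?_)
  rw [← f.toNat_of_lt i.2, ← g.toNat_of_lt i.2, h i i.2]

end SuperdiagMono

/-- The inverse of the first-return decomposition `u G d H` of Dyck paths: `k` becomes the first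
fixed point. -/
def glue (k : ℕ) (G H : ℕ → ℕ) (i : ℕ) : ℕ :=
  if i < k then G i + 1 else if i = k then k else H (i - k - 1) + k + 1

section Glue

variable {n k : ℕ} {F G H : ℕ → ℕ}

lemma glue_self : glue k G H k = k := by
  simp [glue]

lemma lt_glue (hG : IsSuperdiagMonoNat k G) {i : ℕ} (hi : i < k) : i < glue k G H i := by
  have := hG.le_apply i hi
  simp only [glue, if_pos hi]
  omega

lemma IsSuperdiagMonoNat.glue (hk : k ≤ n) (hG : IsSuperdiagMonoNat k G)
    (hH : IsSuperdiagMonoNat (n - k) H) : IsSuperdiagMonoNat (n + 1) (glue k G H) where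
  mono i j hij hj := by
    have hGG : i < k → j < k → G i ≤ G j := fun _ hjk => hG.mono hij hjk
    have hGk : i < k → G i < k := hG.apply_lt i
    have hHH : k < i → H (i - k - 1) ≤ H (j - k - 1) := fun _ => hH.mono (by omega) (by omega)
    simp only [_root_.glue]
    split_ifs <;> omega
  le_apply i hi := by
    have hGi : i < k → i ≤ G i := hG.le_apply i
    have hHi : k < i → i - k - 1 ≤ H (i - k - 1) := fun _ => hH.le_apply _ (by omega)
    simp only [_root_.glue]
    split_ifs <;> omega
  apply_lt i hi := by
    have hGi : i < k → G i < k := hG.apply_lt i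
    have hHi : k < i → H (i - k - 1) < n - k := fun _ => hH.apply_lt _ (by omega)
    simp only [_root_.glue]
    split_ifs <;> omega

lemma glue_congr {G' H' : ℕ → ℕ} (hG : ∀ i < k, G i = G' i) (hH : ∀ j < n - k, H j = H' j)
    {i : ℕ} (hi : i < n + 1) : glue k G H i = glue k G' H' i := by
  simp only [glue]
  split_ifs with h1 h2
  · rw [hG i h1]
  · rfl
  · rw [hH _ (by omega)]

lemma IsSuperdiagMonoNat.left (hF : IsSuperdiagMonoNat (n + 1) F) (hk : k ≤ n) (hkF : F k = k)
    (hlt : ∀ j < k, j < F j) :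
    IsSuperdiagMonoNat k (fun i => F i - 1) where
  mono i j hij hj := Nat.sub_le_sub_right (hF.mono hij (by omega)) 1
  le_apply i hi := by have := hlt i hi; omega
  apply_lt i hi := by have := hF.mono hi.le (by omega); have := hlt i hi; omega

lemma IsSuperdiagMonoNat.right (hF : IsSuperdiagMonoNat (n + 1) F) (hk : k ≤ n) :
    IsSuperdiagMonoNat (n - k) (fun j => F (k + 1 + j) - (k + 1)) where
  mono i j hij hj := Nat.sub_le_sub_right (hF.mono (by omega) (by omega)) _
  le_apply i hi := by have := hF.le_apply (k + 1 + i) (by omega); omega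
  apply_lt i hi := by have := hF.apply_lt (k + 1 + i) (by omega); omega

lemma glue_split (hF : IsSuperdiagMonoNat (n + 1) F) (hkF : F k = k) (hlt : ∀ j < k, j < F j)
    {i : ℕ} (hi : i < n + 1) :
    glue k (fun i => F i - 1) (fun j => F (k + 1 + j) - (k + 1)) i = F i := by
  have hFi := hF.le_apply i hi
  have hlti : i < k → i < F i := hlt i
  simp only [glue]
  split_ifs with h1 h2
  · omega
  · rw [h2, hkF]
  · rw [show k + 1 + (i - k - 1) = i by omega]
    omega

end Glue

namespace SuperdiagMono

def join (n : ℕ) : (Σ k : Fin (n + 1), SuperdiagMono k × SuperdiagMono (n - k)) →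
    SuperdiagMono (n + 1)
  | ⟨k, g, h⟩ => ofNat (g.isSuperdiagMonoNat_toNat.glue (Nat.lt_succ_iff.1 k.2)
      h.isSuperdiagMonoNat_toNat)

lemma toNat_join {n : ℕ} (x : Σ k : Fin (n + 1), SuperdiagMono k × SuperdiagMono (n - k))
    {i : ℕ} (hi : i < n + 1) : (join n x).toNat i = glue x.1 x.2.1.toNat x.2.2.toNat i := by
  obtain ⟨k, g, h⟩ := x
  exact toNat_of_lt _ hi

lemma join_injective (n : ℕ) : Function.Injective (join n) := by
  rintro ⟨k, g, h⟩ ⟨k', g', h'⟩ he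
  have hglue (i) (hi : i < n + 1) : glue k g.toNat h.toNat i = glue k' g'.toNat h'.toNat i := by
    rw [← toNat_join ⟨k, g, h⟩ hi, ← toNat_join ⟨k', g', h'⟩ hi, he]
  obtain rfl : k = k' := by
    have hk := k.2
    have hk' := k'.2
    by_contra hne
    rcases lt_or_gt_of_ne (Fin.val_ne_of_ne hne) with hlt | hlt
    · have hkk := hglue k (by omega)
      rw [glue_self] at hkk
      exact (lt_glue g'.isSuperdiagMonoNat_toNat hlt).ne hkk
    · have hkk := hglue k' (by omega)
      rw [glue_self] at hkk
      exact (lt_glue g.isSuperdiagMonoNat_toNat hlt).ne' hkk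
  have hg : g = g' := ext_toNat fun i hi => by
    have := hglue i (by omega)
    simp only [glue, if_pos hi] at this
    omega
  have hh : h = h' := ext_toNat fun j hj => by
    have := hglue (k + 1 + j) (by omega)
    simp only [glue, if_neg (show ¬(k + 1 + j < k) by omega),
      if_neg (show k + 1 + j ≠ k by omega), show k + 1 + j - k - 1 = j by omega] at this
    omega
  rw [hg, hh]

lemma join_surjective (n : ℕ) : Function.Surjective (join n) := by
  intro f
  have hF := f.isSuperdiagMonoNat_toNat
  have hn : f.toNat n = n :=
    le_antisymm (Nat.lt_succ_iff.1 (hF.apply_lt n n.lt_succ_self)) (hF.le_apply n n.lt_succ_self)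
  have hex : ∃ k, f.toNat k = k := ⟨n, hn⟩
  set k := Nat.find hex
  have hk : k ≤ n := Nat.find_min' hex hn
  have hkF : f.toNat k = k := Nat.find_spec hex
  have hlt (j) (hj : j < k) : j < f.toNat j :=
    (hF.le_apply j (by omega)).lt_of_ne fun h => Nat.find_min hex hj h.symm
  refine ⟨⟨⟨k, by omega⟩, ofNat (hF.left hk hkF hlt), ofNat (hF.right hk)⟩,
    ext_toNat fun i hi => ?_⟩
  rw [toNat_join _ hi, ← glue_split hF hkF hlt hi]
  exact glue_congr (fun j hj => toNat_ofNat (hF.left hk hkF hlt) hj)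
    (fun j hj => toNat_ofNat (hF.right hk) hj) hi

lemma card_succ (n : ℕ) : Nat.card (SuperdiagMono (n + 1)) =
    ∑ k : Fin (n + 1), Nat.card (SuperdiagMono k) * Nat.card (SuperdiagMono (n - k)) := by
  rw [← Nat.card_eq_of_bijective _ ⟨join_injective n, join_surjective n⟩, Nat.card_sigma]
  simp_rw [Nat.card_prod]

theorem card_eq_catalan (n : ℕ) : Nat.card (SuperdiagMono n) = catalan n := by
  induction n using Nat.strong_induction_on with
  | _ n ih =>
    cases n with
    | zero =>
      rw [catalan_zero, Nat.card_eq_one_iff_unique]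
      exact ⟨⟨fun _ _ => Subtype.ext (Subsingleton.elim _ _)⟩, ⟨⟨id, monotone_id, le_refl⟩⟩⟩
    | succ n =>
      rw [card_succ, catalan_succ]
      exact sum_congr rfl fun k _ => by rw [ih k (by omega), ih (n - k) (by omega)]

end SuperdiagMono

noncomputable def partialSupsEquiv (n : ℕ) :
    {σ : Equiv.Perm (Fin n) // ¬ HasDecreasingSubseq σ 3} ≃ SuperdiagMono n where
  toFun σ := ⟨partialSups σ.1, (partialSups σ.1).monotone,
    le_partialSups_of_injective σ.1.injective⟩
  invFun f := ⟨Equiv.ofBijective (fillNonrecords f.1)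
      (Finite.injective_iff_bijective.1 (fillNonrecords_injective _)),
    hasDecreasingSubseq_three_iff.not.2 (fillNonrecords_not_exists_decreasing f.2.1 f.2.2)⟩
  left_inv σ := Subtype.ext <| Equiv.ext <| congrFun <|
    fillNonrecords_partialSups σ.1.injective (hasDecreasingSubseq_three_iff.not.1 σ.2)
  right_inv f := Subtype.ext (partialSups_fillNonrecords f.2.1 f.2.2)

lemma S_two_eq_catalan (N : ℕ) : S 2 N = catalan N := by
  rw [S, Nat.card_congr (partialSupsEquiv N), SuperdiagMono.card_eq_catalan]

theorem stmt0 (N : ℕ) :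
    S 2 N * (Nat.factorial N * Nat.factorial (N + 1)) = Nat.factorial (2 * N) := by
  calc S 2 N * (N.factorial * (N + 1).factorial)
      = (N + 1) * catalan N * N.factorial * N.factorial := by
        rw [S_two_eq_catalan, Nat.factorial_succ]; ring
    _ = (N + N).choose N * N.factorial * N.factorial := by
        rw [succ_mul_catalan_eq_centralBinom, Nat.centralBinom, two_mul]
    _ = (2 * N).factorial := by rw [Nat.add_choose_mul_factorial_mul_factorial, two_mul]
end

section
/- For fixed d ≥ 2 and fixed reals y_1 > ... > y_d with y_1 + ... + y_d = 0, as n → ∞, C_{d,dn} · dim(n + y_1√n, ..., n + y_d√n) → exp(-W(y_1,...,y_d)), where C_{d,dn} = (2π)^{d/2} · n^{dn + d(d+1)/4} / (Γ(dn+1)·e^{dn}) and W(y) = (1/2)∑ y_i² - ∑_{i<j} log(y_i - y_j). -/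
open Finset

/-
After taking logarithms, the normalised dimension is a sum of log-Gamma terms at the points
`x_i = n + y_i √n + (d - i)` and of logarithms of the Vandermonde factors
`(y_i - y_j) √n + (j - i)`.
Stirling's formula `log Γ(x) = (x - 1/2) log x - x + log (2π) / 2 + o(1)` (for real `x`: from the
factorial case, interpolating by log-convexity of `Γ`), combined with the second-order expansion
`(1 + v) log (1 + v) - v = v² / 2 + O(v³)` at `v = (x_i - n) / n`, gives
`log Γ(x_i) = (x_i - 1/2) log n - n + log (2π) / 2 + y_i² / 2 + o(1)`.
Since `∑ y_i = 0`, the constant `C_{d,dn}` cancels `Γ(dn + 1)`, `e^{dn}` and every power of `n`,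
leaving `∑_{i<j} log (y_i - y_j) - ∑ y_i² / 2 = -W(y)`.
-/

open Real Filter Finset Topology

noncomputable def stirlingRemainder (x : ℝ) : ℝ := log (Gamma x) - ((x - 1 / 2) * log x - x)

lemma stirlingRemainder_natCast {m : ℕ} (hm : m ≠ 0) :
    stirlingRemainder m = log (Stirling.stirlingSeq m) + log 2 / 2 := by
  obtain ⟨k, rfl⟩ := Nat.exists_eq_succ_of_ne_zero hm
  have hk : (0 : ℝ) < k + 1 := by positivity
  have hΓ : Gamma (k + 1 : ℕ) = (k + 1).factorial / (k + 1 : ℝ) := by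
    rw [Nat.cast_succ, Gamma_nat_eq_factorial, Nat.factorial_succ, Nat.cast_mul, Nat.cast_succ,
      mul_div_cancel_left₀ _ hk.ne']
  rw [stirlingRemainder, Stirling.log_stirlingSeq_formula, hΓ, log_div (by positivity) hk.ne',
    log_mul two_ne_zero (by positivity), log_div (by positivity) (exp_pos 1).ne', log_exp]
  push_cast
  ring

lemma tendsto_stirlingRemainder_natCast :
    Tendsto (fun m : ℕ => stirlingRemainder m) atTop (𝓝 (log (2 * π) / 2)) := by
  have h := (Stirling.tendsto_stirlingSeq_sqrt_pi.log (by positivity)).add_const (log 2 / 2)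
  rw [log_sqrt pi_pos.le, ← add_div, add_comm, ← log_mul two_ne_zero pi_pos.ne'] at h
  exact h.congr' ((eventually_ne_atTop 0).mono fun m hm => (stirlingRemainder_natCast hm).symm)

lemma log_natCast_sub_log_pred_le {m : ℕ} (hm : 2 ≤ m) :
    log m - log (m - 1) ≤ 1 / (m - 1) := by
  have hm1 : (1 : ℝ) < m := by exact_mod_cast hm
  rw [← log_div (by positivity) (by linarith)]
  calc log (m / (m - 1)) ≤ m / (m - 1) - 1 :=
        log_le_sub_one_of_pos (div_pos (by linarith) (by linarith))
    _ = 1 / (m - 1) := by rw [div_sub_one (by linarith), sub_sub_cancel]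

lemma abs_log_Gamma_nat_add_sub_le {m : ℕ} (hm : 2 ≤ m) {t : ℝ} (ht0 : 0 ≤ t) (ht1 : t ≤ 1) :
    |log (Gamma (m + t)) - log (Gamma m) - t * log m| ≤ 1 / (m - 1) := by
  have hm1 : (1 : ℝ) < m := by exact_mod_cast hm
  have hlog := log_natCast_sub_log_pred_le hm
  rcases ht0.eq_or_lt with rfl | ht
  · simpa using div_nonneg zero_le_one (by linarith : (0 : ℝ) ≤ m - 1)
  have hfeq : ∀ {x : ℝ}, 0 < x → (log ∘ Gamma) (x + 1) = (log ∘ Gamma) x + log x := fun hx => by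
    simp only [Function.comp, Gamma_add_one hx.ne', log_mul hx.ne' (Gamma_pos_of_pos hx).ne']
    ring
  have hle := BohrMollerup.f_add_nat_le (n := m) convexOn_log_Gamma hfeq (by omega) ht ht1
  have hge := BohrMollerup.f_add_nat_ge convexOn_log_Gamma hfeq hm ht
  have hmono : log (m - 1) ≤ log m := log_le_log (by linarith) (by linarith)
  simp only [Function.comp] at hle hge
  rw [abs_le]
  constructor <;> nlinarith

lemma abs_sub_mul_log_add_sub_log_le {m t : ℝ} (hm : 1 ≤ m) (ht0 : 0 ≤ t) (ht1 : t ≤ 1) :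
    |t - (m + t - 1 / 2) * (log (m + t) - log m)| ≤ 1 / m := by
  have hm0 : 0 < m := by linarith
  have hmt : 0 < m + t := by linarith
  have hL : log (m + t) - log m = log ((m + t) / m) := (log_div hmt.ne' hm0.ne').symm
  have hup : log ((m + t) / m) ≤ t / m := by
    calc log ((m + t) / m) ≤ (m + t) / m - 1 := log_le_sub_one_of_pos (div_pos hmt hm0)
      _ = t / m := by rw [div_sub_one hm0.ne', add_sub_cancel_left]
  have hlow : t / (m + t) ≤ log ((m + t) / m) := by
    have := one_sub_inv_le_log_of_pos (div_pos hmt hm0)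
    rwa [inv_div, one_sub_div hmt.ne', add_sub_cancel_left] at this
  rw [hL, abs_le]
  have hs : 0 ≤ m + t - 1 / 2 := by linarith
  constructor
  · have h1 := mul_le_mul_of_nonneg_left hup hs
    have h2 : (m + t - 1 / 2) * (t / m) = t + t * (t - 1 / 2) / m := by field_simp; ring
    have h3 : t * (t - 1 / 2) / m ≤ 1 / m := by gcongr; nlinarith
    linarith
  · have h1 := mul_le_mul_of_nonneg_left hlow hs
    have h2 : (m + t - 1 / 2) * (t / (m + t)) = t - t / (2 * (m + t)) := by field_simp
    have h3 : t / (2 * (m + t)) ≤ 1 / m := by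
      rw [div_le_div_iff₀ (by positivity) hm0]
      nlinarith
    linarith

lemma abs_stirlingRemainder_sub_floor_le {x : ℝ} (hx : 2 ≤ x) :
    |stirlingRemainder x - stirlingRemainder ⌊x⌋₊| ≤ 2 / (⌊x⌋₊ - 1) := by
  set m := ⌊x⌋₊
  have hm : 2 ≤ m := Nat.le_floor (by exact_mod_cast hx)
  have hm1 : (1 : ℝ) < m := by exact_mod_cast hm
  set t := x - m
  have ht0 : 0 ≤ t := sub_nonneg.2 (Nat.floor_le (by linarith))
  have ht1 : t ≤ 1 := by linarith [Nat.lt_floor_add_one x]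
  have hx : x = m + t := by ring
  have hsplit : stirlingRemainder x - stirlingRemainder m =
      (log (Gamma (m + t)) - log (Gamma m) - t * log m) +
        (t - (m + t - 1 / 2) * (log (m + t) - log m)) := by
    rw [stirlingRemainder, stirlingRemainder, hx]
    ring
  have hE := abs_log_Gamma_nat_add_sub_le hm ht0 ht1
  have hT := abs_sub_mul_log_add_sub_log_le hm1.le ht0 ht1
  have hmm : 1 / (m : ℝ) ≤ 1 / (m - 1) := one_div_le_one_div_of_le (by linarith) (by linarith)
  calc |stirlingRemainder x - stirlingRemainder m|
      ≤ 1 / (m - 1) + 1 / m := hsplit ▸ (abs_add_le _ _).trans (add_le_add hE hT)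
    _ ≤ 2 / (m - 1) := by linarith [add_div (1 : ℝ) 1 (m - 1)]

theorem tendsto_stirlingRemainder :
    Tendsto stirlingRemainder atTop (𝓝 (log (2 * π) / 2)) := by
  have hfloor : Tendsto (fun x : ℝ => (⌊x⌋₊ : ℝ) - 1) atTop atTop :=
    tendsto_atTop_add_const_right _ _ (tendsto_natCast_atTop_atTop.comp tendsto_nat_floor_atTop)
  have hdiff : Tendsto (fun x => stirlingRemainder x - stirlingRemainder ⌊x⌋₊) atTop (𝓝 0) :=
    squeeze_zero_norm'
      ((eventually_ge_atTop 2).mono fun x hx => abs_stirlingRemainder_sub_floor_le hx)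
      (hfloor.const_div_atTop 2)
  simpa using (tendsto_stirlingRemainder_natCast.comp tendsto_nat_floor_atTop).add hdiff

lemma abs_one_add_mul_log_one_add_sub_le {v : ℝ} (hv : |v| ≤ 1 / 2) :
    |(1 + v) * log (1 + v) - v - v ^ 2 / 2| ≤ 4 * |v| ^ 3 := by
  have htaylor := abs_log_sub_add_sum_range_le (x := -v) (by rw [abs_neg]; linarith) 2
  simp only [sum_range_succ, sum_range_zero, abs_neg, sub_neg_eq_add] at htaylor
  set r := log (1 + v) - (v - v ^ 2 / 2)
  have hr : |r| ≤ 2 * |v| ^ 3 := by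
    have h : |r| ≤ |v| ^ 3 / (1 - |v|) := by convert htaylor using 2; simp only [r]; ring
    calc |r| ≤ |v| ^ 3 / (1 - |v|) := h
      _ ≤ |v| ^ 3 / (1 / 2) := by gcongr; linarith
      _ = 2 * |v| ^ 3 := by ring
  have hsplit : (1 + v) * log (1 + v) - v - v ^ 2 / 2 = -(v ^ 3 / 2) + (1 + v) * r := by
    simp only [r]; ring
  have h1v : |1 + v| ≤ 3 / 2 := (abs_add_le _ _).trans (by rw [abs_one]; linarith)
  rw [hsplit]
  calc |-(v ^ 3 / 2) + (1 + v) * r| ≤ |v| ^ 3 / 2 + 3 / 2 * (2 * |v| ^ 3) := by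
        refine (abs_add_le _ _).trans (add_le_add (by simp [abs_div, abs_pow]) ?_)
        rw [abs_mul]
        exact mul_le_mul h1v hr (abs_nonneg _) (by norm_num)
    _ ≤ 4 * |v| ^ 3 := by nlinarith [pow_nonneg (abs_nonneg v) 3]

lemma tendsto_mul_one_add_mul_log_one_add_sub {α : Type*} {l : Filter α} {s v : α → ℝ}
    {b : ℝ} (hv : Tendsto v l (𝓝 0)) (hsv : Tendsto (fun a => s a * v a ^ 2) l (𝓝 b)) :
    Tendsto (fun a => s a * ((1 + v a) * log (1 + v a) - v a)) l (𝓝 (b / 2)) := by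
  have hsmall : ∀ᶠ a in l, |v a| ≤ 1 / 2 := by
    simpa [Real.norm_eq_abs] using
      (tendsto_iff_norm_sub_tendsto_zero.1 hv).eventually (eventually_le_nhds (by norm_num))
  have herr : Tendsto (fun a => s a * ((1 + v a) * log (1 + v a) - v a - v a ^ 2 / 2)) l (𝓝 0) := by
    have hbound : Tendsto (fun a => 4 * |s a * v a ^ 2| * |v a|) l (𝓝 0) := by
      simpa using ((hsv.abs.const_mul 4).mul hv.abs)
    refine squeeze_zero_norm' (hsmall.mono fun a ha => ?_) hbound
    rw [Real.norm_eq_abs, abs_mul]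
    calc |s a| * |(1 + v a) * log (1 + v a) - v a - v a ^ 2 / 2| ≤ |s a| * (4 * |v a| ^ 3) :=
          mul_le_mul_of_nonneg_left (abs_one_add_mul_log_one_add_sub_le ha) (abs_nonneg _)
      _ = 4 * |s a * v a ^ 2| * |v a| := by rw [abs_mul, abs_pow]; ring
  simpa [mul_sub, add_comm, mul_div_assoc] using (hsv.div_const 2).add herr

lemma tendsto_natCast_add_mul_sqrt_atTop (y c : ℝ) :
    Tendsto (fun n : ℕ => (n : ℝ) + y * √n + c) atTop atTop := by
  have hsqrt : Tendsto (fun n : ℕ => √(n : ℝ)) atTop atTop :=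
    tendsto_sqrt_atTop.comp tendsto_natCast_atTop_atTop
  refine tendsto_atTop_add_const_right _ c
    ((hsqrt.atTop_mul_atTop₀ (tendsto_atTop_add_const_right _ y hsqrt)).congr fun n => ?_)
  rw [mul_add, mul_self_sqrt n.cast_nonneg, mul_comm]

lemma tendsto_natCast_add_mul_sqrt_mul_log_sub (y c : ℝ) :
    Tendsto (fun n : ℕ => ((n : ℝ) + y * √n + c - 1 / 2) * (log (n + y * √n + c) - log n) -
      (y * √n + c)) atTop (𝓝 (y ^ 2 / 2)) := by
  have hinv : Tendsto (fun n : ℕ => (√(n : ℝ))⁻¹) atTop (𝓝 0) :=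
    tendsto_inv_atTop_zero.comp (tendsto_sqrt_atTop.comp tendsto_natCast_atTop_atTop)
  -- with `v = (y √n + c) / n` the expression is `n ((1 + v) log (1 + v) - v) - log (1 + v) / 2`
  set w : ℕ → ℝ := fun n => y + c * (√(n : ℝ))⁻¹
  set v : ℕ → ℝ := fun n => w n * (√(n : ℝ))⁻¹
  have hw : Tendsto w atTop (𝓝 y) := by simpa using (hinv.const_mul c).const_add y
  have hv : Tendsto v atTop (𝓝 0) := by simpa using hw.mul hinv
  have hpos : ∀ᶠ n : ℕ in atTop, (0 : ℝ) < n := (eventually_gt_atTop 0).mono fun n hn => by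
    exact_mod_cast hn
  have hsv : Tendsto (fun n : ℕ => (n : ℝ) * v n ^ 2) atTop (𝓝 (y ^ 2)) :=
    (hw.pow 2).congr' (hpos.mono fun n hn => by
      simp only [v]
      rw [mul_pow, inv_pow, sq_sqrt hn.le]
      field_simp)
  have hv1 : Tendsto (fun n => 1 + v n) atTop (𝓝 1) := by simpa using hv.const_add 1
  have hlog : Tendsto (fun n => log (1 + v n)) atTop (𝓝 0) := by
    simpa using hv1.log one_ne_zero
  have h1v : ∀ᶠ n in atTop, 0 < 1 + v n := hv1.eventually (lt_mem_nhds one_pos)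
  have hlim := (tendsto_mul_one_add_mul_log_one_add_sub hv hsv).sub (hlog.const_mul (1 / 2))
  rw [mul_zero, sub_zero] at hlim
  refine hlim.congr' ?_
  filter_upwards [hpos, h1v] with n hn hn1
  have hnv : y * √n + c = n * v n := by
    simp only [v, w]
    field_simp
    linear_combination (c + y * √n) * sq_sqrt hn.le
  rw [show (n : ℝ) + y * √n + c = n * (1 + v n) by rw [add_assoc, hnv]; ring, hnv,
    log_mul hn.ne' hn1.ne']
  ring

lemma tendsto_log_Gamma_natCast_add_mul_sqrt (y c : ℝ) :
    Tendsto (fun n : ℕ => log (Gamma (n + y * √n + c)) - ((n + y * √n + c - 1 / 2) * log n - n))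
      atTop (𝓝 (log (2 * π) / 2 + y ^ 2 / 2)) :=
  ((tendsto_stirlingRemainder.comp (tendsto_natCast_add_mul_sqrt_atTop y c)).add
    (tendsto_natCast_add_mul_sqrt_mul_log_sub y c)).congr fun n => by
      simp only [Function.comp, stirlingRemainder]
      ring

lemma tendsto_log_mul_add_sub_log {a : ℝ} (ha : 0 < a) (b : ℝ) :
    Tendsto (fun s : ℝ => log (a * s + b) - log s) atTop (𝓝 (log a)) := by
  have h : Tendsto (fun s : ℝ => a + b * s⁻¹) atTop (𝓝 a) := by
    simpa using (tendsto_inv_atTop_zero.const_mul b).const_add a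
  refine (h.log ha.ne').congr' ?_
  filter_upwards [eventually_gt_atTop 0,
    (tendsto_atTop_add_const_right _ b (tendsto_id.const_mul_atTop ha)).eventually_gt_atTop 0]
    with s hs hab
  rw [id] at hab
  rw [← log_div hab.ne' hs.ne', add_div, mul_div_cancel_right₀ _ hs.ne', div_eq_mul_inv]

lemma dimR_eq_exp {d : ℕ} {l : Fin d → ℝ} (hsum : 0 < ∑ i, l i + 1)
    (hrow : ∀ i : Fin d, 0 < l i - (i : ℕ) + d)
    (hpair : ∀ p ∈ univ.filter (fun p : Fin d × Fin d => p.1 < p.2),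
      0 < l p.1 - l p.2 + (p.2 : ℕ) - (p.1 : ℕ)) :
    dimR d l = exp (log (Gamma (∑ i, l i + 1)) - ∑ i, log (Gamma (l i - (i : ℕ) + d)) +
      ∑ p ∈ univ.filter (fun p : Fin d × Fin d => p.1 < p.2),
        log (l p.1 - l p.2 + (p.2 : ℕ) - (p.1 : ℕ))) := by
  rw [exp_add, exp_sub, exp_sum, exp_sum, exp_log (Gamma_pos_of_pos hsum), dimR]
  congr 1
  · exact congrArg _ (prod_congr rfl fun i _ => (exp_log (Gamma_pos_of_pos (hrow i))).symm)
  · exact prod_congr rfl fun p hp => (exp_log (hpair p hp)).symm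

lemma sum_fin_natCast_val (d : ℕ) : ∑ i : Fin d, ((i : ℕ) : ℝ) = d * (d - 1) / 2 := by
  rw [← Nat.cast_sum, Fin.sum_univ_eq_sum_range (fun i => i) d, sum_range_id,
    ← Nat.choose_two_right, Nat.cast_choose_two]

lemma card_filter_fst_lt_snd (d : ℕ) :
    ((univ.filter (fun p : Fin d × Fin d => p.1 < p.2)).card : ℝ) = d * (d - 1) / 2 := by
  rw [Fintype.card_product_filter_lt, Fintype.card_fin, Nat.cast_choose_two]

lemma normalized_dimR_eq_exp {d : ℕ} {N : ℝ} (hN : 0 < N) {l : Fin d → ℝ}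
    (hl : ∑ i, l i = d * N) (hrow : ∀ i : Fin d, 0 < l i - (i : ℕ) + d)
    (hpair : ∀ p ∈ univ.filter (fun p : Fin d × Fin d => p.1 < p.2),
      0 < l p.1 - l p.2 + (p.2 : ℕ) - (p.1 : ℕ)) :
    (2 * π) ^ ((d : ℝ) / 2) * N ^ (d * N + (d : ℝ) * (d + 1) / 4) /
        (Gamma (d * N + 1) * exp (d * N)) * dimR d l =
      exp (∑ p ∈ univ.filter (fun p : Fin d × Fin d => p.1 < p.2),
          (log (l p.1 - l p.2 + (p.2 : ℕ) - (p.1 : ℕ)) - log √N) -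
        ∑ i, (log (Gamma (l i - (i : ℕ) + d)) - ((l i - (i : ℕ) + d - 1 / 2) * log N - N) -
          log (2 * π) / 2)) := by
  have hΓ : 0 < Gamma (d * N + 1) := Gamma_pos_of_pos (by positivity)
  rw [dimR_eq_exp (by rw [hl]; positivity) hrow hpair, hl, rpow_def_of_pos (by positivity),
    rpow_def_of_pos hN, ← exp_log hΓ, ← exp_add, ← exp_add, ← exp_sub, ← exp_add]
  congr 1
  simp only [sum_sub_distrib, sum_const, card_filter_fst_lt_snd, card_univ, Fintype.card_fin,
    nsmul_eq_mul, ← sum_mul, sum_add_distrib, hl, sum_fin_natCast_val, log_sqrt hN.le, log_exp]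
  ring

lemma tendsto_normalized_dimR_exponent {d : ℕ} {y : Fin d → ℝ}
    (hy : ∀ i j : Fin d, i < j → y j < y i) :
    Tendsto (fun n : ℕ =>
      ∑ p ∈ univ.filter (fun p : Fin d × Fin d => p.1 < p.2),
          (log (((n : ℝ) + y p.1 * √n) - (n + y p.2 * √n) + (p.2 : ℕ) - (p.1 : ℕ)) - log √n) -
        ∑ i, (log (Gamma ((n : ℝ) + y i * √n - (i : ℕ) + d)) -
          (((n : ℝ) + y i * √n - (i : ℕ) + d - 1 / 2) * log n - n) - log (2 * π) / 2))
      atTop (𝓝 (-W d y)) := by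
  have hpairs := tendsto_finsetSum (univ.filter (fun p : Fin d × Fin d => p.1 < p.2)) fun p hp =>
    (tendsto_log_mul_add_sub_log (sub_pos.2 (hy _ _ (mem_filter.1 hp).2))
      (((p.2 : ℕ) : ℝ) - (p.1 : ℕ))).comp (tendsto_sqrt_atTop.comp tendsto_natCast_atTop_atTop)
  have hrows := tendsto_finsetSum univ fun i _ =>
    (tendsto_log_Gamma_natCast_add_mul_sqrt (y i) (d - (i : ℕ))).sub_const (log (2 * π) / 2)
  convert hpairs.sub hrows using 2
  · congr 1
    · exact sum_congr rfl fun p _ => by simp only [Function.comp]; ring_nf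
    · exact sum_congr rfl fun i _ => by ring_nf
  · rw [W]
    simp only [add_sub_cancel_left, ← sum_div]
    ring

theorem stmt13_general (d : ℕ) (y : Fin d → ℝ) (hy : ∀ i j : Fin d, i < j → y j < y i)
    (hsum : ∑ i, y i = 0) :
    Tendsto (fun n : ℕ =>
      ((2 * π) ^ ((d : ℝ) / 2) * (n : ℝ) ^ ((d * n : ℕ) + (d : ℝ) * (d + 1) / 4 : ℝ) /
          (Real.Gamma (d * n + 1) * Real.exp (d * n))) *
        dimR d (fun i => (n : ℝ) + y i * Real.sqrt n))
      atTop (nhds (Real.exp (- W d y))) := by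
  have hrow : ∀ᶠ n : ℕ in atTop, ∀ i : Fin d, 0 < (n : ℝ) + y i * √n - (i : ℕ) + d :=
    eventually_all.2 fun i =>
      ((tendsto_natCast_add_mul_sqrt_atTop (y i) (d - (i : ℕ))).eventually_gt_atTop 0).mono
        fun n hn => by linarith
  have hpair (n : ℕ) : ∀ p ∈ univ.filter (fun p : Fin d × Fin d => p.1 < p.2),
      0 < ((n : ℝ) + y p.1 * √n) - (n + y p.2 * √n) + (p.2 : ℕ) - (p.1 : ℕ) := fun p hp => by
    have hlt := (mem_filter.1 hp).2
    have hidx : ((p.1 : ℕ) : ℝ) < (p.2 : ℕ) := by exact_mod_cast hlt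
    nlinarith [hy _ _ hlt, sqrt_nonneg (n : ℝ)]
  have hl (n : ℕ) : ∑ i, ((n : ℝ) + y i * √n) = d * n := by
    simp [sum_add_distrib, ← sum_mul, hsum]
  refine ((continuous_exp.tendsto _).comp (tendsto_normalized_dimR_exponent hy)).congr' ?_
  filter_upwards [eventually_gt_atTop 0, hrow] with n hn hrow
  rw [Function.comp, ← normalized_dimR_eq_exp (by exact_mod_cast hn) (hl n) hrow (hpair n)]
  push_cast
  rfl

open Real Filter in
theorem stmt13 (d : ℕ) (hd : 2 ≤ d) (y : Fin d → ℝ) (hy : ∀ i j : Fin d, i < j → y j < y i)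
    (hsum : ∑ i, y i = 0) :
    Tendsto (fun n : ℕ =>
      ((2 * π) ^ ((d : ℝ) / 2) * (n : ℝ) ^ ((d * n : ℕ) + (d : ℝ) * (d + 1) / 4 : ℝ) /
          (Real.Gamma (d * n + 1) * Real.exp (d * n))) *
        dimR d (fun i => (n : ℝ) + y i * Real.sqrt n))
      atTop (nhds (Real.exp (- W d y))) :=
  stmt13_general d y hy hsum
end

section
/- The Mehta integral at β = 2 satisfies Ψ(d;2) = ∫_{ℝ^d} exp(-∑_{i=1}^d x_i²) · ∏_{1≤i<j≤d} (x_i - x_j)² dx = (2π)^{d/2} · 2^{-d²/2} · ∏_{i=1}^{d+1} Γ(i). -/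
open Finset

/-!
Write `∏_{i<j} (x_i - x_j)` as the Vandermonde determinant `det (p_i (x_j))` of the monic Hermite
polynomials `p_i`. They are orthogonal for the weight `e^{-t²}` with `∫ p_n² e^{-t²} = √π n! / 2ⁿ`:
since `p_{n+1} e^{-t²} = -½ (p_n e^{-t²})'`, integrating by parts `n` times turns `∫ q p_n e^{-t²}`
into `2⁻ⁿ ∫ q⁽ⁿ⁾ e^{-t²}`. Expanding the squared determinant over pairs of permutations and
integrating coordinatewise (Andréief), only the diagonal pairs survive, which leaves
`d! ∏_{n<d} √π n! / 2ⁿ`.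
-/

open MeasureTheory Real Polynomial
open scoped Nat

theorem Equiv.Perm.prod_ite_apply_eq {ι M : Type*} [Fintype ι] [DecidableEq ι]
    [CommMonoidWithZero M] (c : ι → M) (σ τ : Equiv.Perm ι) :
    ∏ i, (if σ i = τ i then c (σ i) else 0) = if σ = τ then ∏ i, c i else 0 := by
  split_ifs with h
  · subst h
    simp only [if_true]
    exact Equiv.prod_comp σ c
  · obtain ⟨i, hi⟩ : ∃ i, σ i ≠ τ i := by
      by_contra! hall
      exact h (Equiv.ext hall)
    exact prod_eq_zero (mem_univ i) (if_neg hi)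

theorem integral_det_sq_of_orthogonal {ι α : Type*} [Fintype ι] [DecidableEq ι]
    [MeasurableSpace α] {μ : Measure α} [SigmaFinite μ] (f : ι → α → ℝ) (c : ι → ℝ)
    (hint : ∀ i j, Integrable (fun t => f i t * f j t) μ)
    (horth : ∀ i j, ∫ t, f i t * f j t ∂μ = if i = j then c i else 0) :
    ∫ x, (Matrix.of fun i j => f i (x j)).det ^ 2 ∂(Measure.pi fun _ => μ) =
      (Fintype.card ι)! * ∏ i, c i := by
  have hexpand : ∀ x : ι → α, (Matrix.of fun i j => f i (x j)).det ^ 2 =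
      ∑ σ : Equiv.Perm ι, ∑ τ : Equiv.Perm ι,
        ((Equiv.Perm.sign σ : ℤ) * (Equiv.Perm.sign τ : ℤ) : ℝ) * ∏ i, f (σ i) (x i) * f (τ i) (x i) := by
    intro x
    simp only [sq, Matrix.det_apply, Matrix.of_apply, sum_mul_sum, prod_mul_distrib, Units.smul_def,
      zsmul_eq_mul]
    refine sum_congr rfl fun σ _ => sum_congr rfl fun τ _ => ?_
    ring
  have hterm : ∀ σ τ : Equiv.Perm ι,
      Integrable (fun x => ∏ i, f (σ i) (x i) * f (τ i) (x i)) (Measure.pi fun _ => μ) := fun σ τ =>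
    Integrable.fintype_prod (f := fun i t => f (σ i) t * f (τ i) t) fun i => hint _ _
  simp_rw [hexpand]
  rw [integral_finsetSum _ fun σ _ => integrable_finsetSum _ fun τ _ => (hterm σ τ).const_mul _]
  simp_rw [integral_finsetSum _ fun τ _ => (hterm _ τ).const_mul _, integral_const_mul]
  have hdiag : ∀ σ τ : Equiv.Perm ι,
      ∫ x : ι → α, ∏ i, f (σ i) (x i) * f (τ i) (x i) ∂(Measure.pi fun _ => μ) =
        if σ = τ then ∏ i, c i else 0 := fun σ τ => by
    rw [integral_fintype_prod_eq_prod (fun i t => f (σ i) t * f (τ i) t)]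
    simp_rw [horth]
    exact Equiv.Perm.prod_ite_apply_eq c σ τ
  simp_rw [hdiag, mul_ite, mul_zero, sum_ite_eq, mem_univ, if_true]
  simp only [← Int.cast_mul, ← Units.val_mul, Int.units_mul_self, Units.val_one, Int.cast_one,
    one_mul, sum_const, card_univ, Fintype.card_perm, nsmul_eq_mul]

theorem Polynomial.iterate_derivative_natDegree {R : Type*} [CommSemiring R] (p : R[X]) :
    derivative^[p.natDegree] p = C (p.natDegree ! • p.leadingCoeff) := by
  rw [eq_C_of_natDegree_eq_zero (Nat.eq_zero_of_le_zero
    ((natDegree_iterate_derivative p _).trans_eq (Nat.sub_self _))), coeff_iterate_derivative,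
    zero_add, Nat.descFactorial_self, leadingCoeff]

/-- `2⁻ⁿ Hₙ` for the physicists' Hermite polynomials `Hₙ`, i.e. `(-½)ⁿ e^{t²} (d/dt)ⁿ e^{-t²}`. -/
noncomputable def monicHermite : ℕ → ℝ[X]
  | 0 => 1
  | n + 1 => X * monicHermite n - C (1 / 2) * derivative (monicHermite n)

theorem monicHermite_succ (n : ℕ) :
    monicHermite (n + 1) = X * monicHermite n - C (1 / 2) * derivative (monicHermite n) := rfl

theorem monicHermite_monic_and_natDegree (n : ℕ) :
    (monicHermite n).Monic ∧ (monicHermite n).natDegree = n := by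
  induction n with
  | zero => exact ⟨monic_one, natDegree_one⟩
  | succ n ih =>
    obtain ⟨hmonic, hdeg⟩ := ih
    have hXmonic : (X * monicHermite n).Monic := monic_X.mul hmonic
    have hXdeg : (X * monicHermite n).natDegree = n + 1 := by
      rw [natDegree_mul X_ne_zero hmonic.ne_zero, natDegree_X, hdeg, add_comm]
    have hlt :
        (C (1 / 2 : ℝ) * derivative (monicHermite n)).degree < (X * monicHermite n).degree := by
      calc _ = (derivative (monicHermite n)).degree := degree_C_mul (by norm_num)
        _ < (monicHermite n).degree := degree_derivative_lt hmonic.ne_zero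
        _ < _ := by
          rw [degree_eq_natDegree hmonic.ne_zero, degree_eq_natDegree hXmonic.ne_zero, hdeg, hXdeg]
          exact_mod_cast n.lt_succ_self
    refine ⟨hXmonic.sub_of_left hlt, ?_⟩
    rw [monicHermite_succ, natDegree_eq_of_degree_eq (degree_sub_eq_left_of_degree_lt hlt), hXdeg]

theorem monicHermite_monic (n : ℕ) : (monicHermite n).Monic :=
  (monicHermite_monic_and_natDegree n).1

theorem natDegree_monicHermite (n : ℕ) : (monicHermite n).natDegree = n :=
  (monicHermite_monic_and_natDegree n).2

theorem hasDerivAt_monicHermite_mul_exp (n : ℕ) (t : ℝ) :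
    HasDerivAt (fun t => (monicHermite n).eval t * exp (-t ^ 2))
      (-2 * ((monicHermite (n + 1)).eval t * exp (-t ^ 2))) t := by
  have hexp : HasDerivAt (fun t : ℝ => exp (-t ^ 2)) (exp (-t ^ 2) * -(2 * t)) t := by
    simpa using ((hasDerivAt_pow 2 t).neg).exp
  refine (((monicHermite n).hasDerivAt t).fun_mul hexp).congr_deriv ?_
  rw [monicHermite_succ]
  simp only [eval_sub, eval_mul, eval_X, eval_C]
  ring

theorem integrable_eval_mul_exp_neg_sq (q : ℝ[X]) :
    Integrable fun t => q.eval t * exp (-t ^ 2) := by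
  have hmonomial (k : ℕ) : Integrable fun t : ℝ => t ^ k * exp (-t ^ 2) := by
    simpa [rpow_natCast] using integrable_rpow_mul_exp_neg_mul_sq one_pos
      (by linarith [k.cast_nonneg (α := ℝ)] : (-1 : ℝ) < k)
  simp_rw [eval_eq_sum_range, sum_mul, mul_assoc]
  exact integrable_finsetSum _ fun k _ => (hmonomial k).const_mul _

theorem integral_mul_monicHermite_succ (q : ℝ[X]) (n : ℕ) :
    ∫ t, (q * monicHermite (n + 1)).eval t * exp (-t ^ 2) =
      2⁻¹ * ∫ t, (derivative q * monicHermite n).eval t * exp (-t ^ 2) := by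
  have hibp := integral_mul_deriv_eq_deriv_mul_of_integrable
    (fun t _ => q.hasDerivAt t) (fun t _ => hasDerivAt_monicHermite_mul_exp n t)
    (by simpa [Pi.mul_def, mul_assoc, mul_left_comm] using
      (integrable_eval_mul_exp_neg_sq (q * monicHermite (n + 1))).const_mul 2)
    (by simpa [Pi.mul_def, mul_assoc] using
      integrable_eval_mul_exp_neg_sq (derivative q * monicHermite n))
    (by simpa [Pi.mul_def, mul_assoc] using integrable_eval_mul_exp_neg_sq (q * monicHermite n))
  simp only [eval_mul, mul_assoc] at hibp ⊢
  simp only [mul_left_comm _ (-2 : ℝ), integral_const_mul] at hibp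
  linarith

theorem integral_mul_monicHermite (q : ℝ[X]) (n : ℕ) :
    ∫ t, (q * monicHermite n).eval t * exp (-t ^ 2) =
      (2 ^ n)⁻¹ * ∫ t, (derivative^[n] q).eval t * exp (-t ^ 2) := by
  induction n generalizing q with
  | zero => simp [monicHermite]
  | succ n ih =>
    rw [integral_mul_monicHermite_succ, ih, Function.iterate_succ_apply, pow_succ, mul_inv]
    ring

theorem integral_monicHermite_mul_self (n : ℕ) :
    ∫ t, (monicHermite n * monicHermite n).eval t * exp (-t ^ 2) = √π * n ! / 2 ^ n := by
  have h := iterate_derivative_natDegree (monicHermite n)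
  rw [natDegree_monicHermite, (monicHermite_monic n).leadingCoeff, nsmul_one] at h
  rw [integral_mul_monicHermite, h]
  simp only [eval_C, integral_const_mul]
  have := integral_gaussian 1
  simp only [neg_mul, one_mul, div_one] at this
  rw [this]
  ring

theorem integral_monicHermite_mul_monicHermite (m n : ℕ) :
    ∫ t, (monicHermite m * monicHermite n).eval t * exp (-t ^ 2) =
      if m = n then √π * n ! / 2 ^ n else 0 := by
  have hvanish {k l : ℕ} (h : k < l) :
      ∫ t, (monicHermite k * monicHermite l).eval t * exp (-t ^ 2) = 0 := by
    rw [integral_mul_monicHermite, iterate_derivative_eq_zero (by rwa [natDegree_monicHermite])]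
    simp
  rcases lt_trichotomy m n with h | rfl | h
  · rw [hvanish h, if_neg h.ne]
  · rw [if_pos rfl, integral_monicHermite_mul_self]
  · rw [mul_comm, hvanish h, if_neg h.ne']

theorem Finset.prod_filter_fst_lt_snd {n : ℕ} {M : Type*} [CommMonoid M] (g : Fin n × Fin n → M) :
    ∏ p ∈ univ.filter (fun p : Fin n × Fin n => p.1 < p.2), g p = ∏ i, ∏ j ∈ Ioi i, g (i, j) := by
  rw [prod_filter, ← univ_product_univ, prod_product]
  exact prod_congr rfl fun i _ => by rw [← prod_filter, filter_lt_eq_Ioi]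

theorem Matrix.det_eval_monic_eq_prod_sub {R : Type*} [CommRing R] {n : ℕ} (v : Fin n → R)
    (p : Fin n → R[X]) (h_deg : ∀ i, (p i).natDegree = i) (h_monic : ∀ i, (p i).Monic) :
    (Matrix.of fun i j => (p i).eval (v j)).det = ∏ i, ∏ j ∈ Ioi i, (v j - v i) := by
  rw [← det_vandermonde, det_eval_matrixOfPolynomials_eq_det_vandermonde v p h_deg h_monic,
    ← det_transpose]
  rfl

theorem sq_prod_sub_eq_prod_filter {n : ℕ} (v : Fin n → ℝ) :
    (∏ i, ∏ j ∈ Ioi i, (v j - v i)) ^ 2 =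
      ∏ p ∈ univ.filter (fun p : Fin n × Fin n => p.1 < p.2), (v p.1 - v p.2) ^ 2 := by
  rw [prod_filter_fst_lt_snd, ← prod_pow]
  exact prod_congr rfl fun i _ => by rw [← prod_pow]; exact prod_congr rfl fun j _ => by ring

theorem factorial_mul_prod_sqrt_pi_mul_factorial_div_two_pow {d : ℕ} :
    (d ! : ℝ) * ∏ i : Fin d, (√π * (i : ℕ)! / 2 ^ (i : ℕ)) =
      (2 * π) ^ ((d : ℝ) / 2) * 2 ^ (-(d : ℝ) ^ 2 / 2) * ∏ i ∈ range (d + 1), (i ! : ℝ) := by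
  have hsum : ((∑ i ∈ range d, i : ℕ) : ℝ) = ((d : ℝ) ^ 2 - d) / 2 := by
    induction d with
    | zero => simp
    | succ n ih => rw [sum_range_succ, Nat.cast_add, ih]; push_cast; ring
  have hpi : √π ^ d = π ^ ((d : ℝ) / 2) := by
    rw [sqrt_eq_rpow, ← rpow_natCast, ← rpow_mul pi_pos.le, one_div_mul_eq_div]
  have htwo : (2 : ℝ) ^ ((d : ℝ) / 2) * 2 ^ (-(d : ℝ) ^ 2 / 2) = (2 ^ (∑ i ∈ range d, i))⁻¹ := by
    rw [← rpow_add two_pos, ← rpow_natCast 2 (∑ i ∈ range d, i), ← rpow_neg zero_le_two, hsum]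
    ring_nf
  have hgauss : (2 * π) ^ ((d : ℝ) / 2) * 2 ^ (-(d : ℝ) ^ 2 / 2) =
      √π ^ d / 2 ^ (∑ i ∈ range d, i) := by
    rw [mul_rpow zero_le_two pi_pos.le, hpi, mul_right_comm, htwo, inv_mul_eq_div]
  rw [prod_range_succ, hgauss, Fin.prod_univ_eq_prod_range (fun i => √π * i ! / 2 ^ i),
    prod_div_distrib, prod_mul_distrib, prod_const, card_range, prod_pow_eq_pow_sum]
  ring

theorem mehta_two (d : ℕ) :
    mehta d 2 = ∫ x : Fin d → ℝ, exp (-∑ i, x i ^ 2) *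
      ∏ p ∈ univ.filter (fun p : Fin d × Fin d => p.1 < p.2), (x p.1 - x p.2) ^ 2 := by
  refine integral_congr_ae (Filter.Eventually.of_forall fun x => ?_)
  simp only [div_self (two_ne_zero' ℝ), neg_mul, one_mul, rpow_two, sq_abs]

theorem integral_exp_neg_sum_sq_mul_prod_sub_sq (d : ℕ) :
    ∫ x : Fin d → ℝ, exp (-∑ i, x i ^ 2) *
      ∏ p ∈ univ.filter (fun p : Fin d × Fin d => p.1 < p.2), (x p.1 - x p.2) ^ 2 =
      d ! * ∏ i : Fin d, (√π * (i : ℕ)! / 2 ^ (i : ℕ)) := by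
  set f : Fin d → ℝ → ℝ := fun i t => exp (-t ^ 2 / 2) * (monicHermite i).eval t
  have hf (i j : Fin d) (t : ℝ) :
      f i t * f j t = (monicHermite i * monicHermite j).eval t * exp (-t ^ 2) := by
    simp only [f, eval_mul]
    rw [show exp (-t ^ 2) = exp (-t ^ 2 / 2) * exp (-t ^ 2 / 2) by rw [← exp_add]; ring_nf]
    ring
  have hdet (x : Fin d → ℝ) : exp (-∑ i, x i ^ 2) *
      ∏ p ∈ univ.filter (fun p : Fin d × Fin d => p.1 < p.2), (x p.1 - x p.2) ^ 2 =
      (Matrix.of fun i j => f i (x j)).det ^ 2 := by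
    have hcol : (Matrix.of fun i j => f i (x j)).det =
        (∏ j, exp (-x j ^ 2 / 2)) * ∏ i, ∏ j ∈ Ioi i, (x j - x i) := by
      rw [← Matrix.det_eval_monic_eq_prod_sub x _ (fun i => natDegree_monicHermite i)
        (fun i => monicHermite_monic i), ← Matrix.det_mul_row]
      rfl
    have hweight : (∏ j, exp (-x j ^ 2 / 2)) ^ 2 = exp (-∑ i, x i ^ 2) := by
      rw [← prod_pow, ← sum_neg_distrib, exp_sum]
      exact prod_congr rfl fun j _ => by rw [← exp_nat_mul]; ring_nf
    rw [hcol, mul_pow, hweight, sq_prod_sub_eq_prod_filter]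
  simp_rw [hdet]
  rw [volume_pi, integral_det_sq_of_orthogonal f (fun i => √π * (i : ℕ)! / 2 ^ (i : ℕ))
    (fun i j => by simpa only [hf] using integrable_eval_mul_exp_neg_sq _)
    (fun i j => by
      simp only [hf, integral_monicHermite_mul_monicHermite, Fin.val_inj]
      rcases eq_or_ne i j with rfl | h <;> simp [*]),
    Fintype.card_fin]

theorem stmt17 (d : ℕ) :
    (mehta d 2 = ∫ x : Fin d → ℝ, Real.exp (-∑ i, x i ^ 2) *
      ∏ p ∈ Finset.univ.filter (fun p : Fin d × Fin d => p.1 < p.2), (x p.1 - x p.2) ^ 2) ∧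
    mehta d 2 = (2 * Real.pi) ^ ((d : ℝ) / 2) * 2 ^ (-(d : ℝ) ^ 2 / 2) *
      ∏ i ∈ Finset.range (d + 1), (Nat.factorial i : ℝ) := by
  refine ⟨mehta_two d, ?_⟩
  rw [mehta_two, integral_exp_neg_sum_sq_mul_prod_sub_sq,
    factorial_mul_prod_sqrt_pi_mul_factorial_div_two_pow]
end
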